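/- Let Z_ε = ℤ[ε]/(ε^2 − 1) and h = 1 + ε. Let M be the 6 × 6 matrix over Z_ε given by M = A − h·I, where A is the adjacency matrix of the E_6 Dynkin tree with vertices 1,...,6, edges {1,2}, {2,3}, {3,4}, {4,5} and {3,6}. Then M is equivalent over Z_ε to the diagonal matrix diag(1, 1, 1, 1, 1, 2h − 1) = diag(1, 1, 1, 1, 1, 1 + 2ε); that is, there exist invertible matrices S, T over Z_ε with S·M·T = diag(1, 1, 1, 1, 1, 1 + 2ε). -/
import Mathlib


/-- The ring `ℤ[ε]/(ε² − 1)`, realized as `ℤ[X]/(X² − 1)`. -/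
abbrev Zeps : Type := Polynomial ℤ ⧸ Ideal.span {(Polynomial.X : Polynomial ℤ) ^ 2 - 1}

/-- The class `ε` of `X` in `ℤ[X]/(X² − 1)`. -/
noncomputable def eps : Zeps := Ideal.Quotient.mk _ Polynomial.X

/-- The hyperbolic element `h = 1 + ε`. -/
noncomputable def hq : Zeps := 1 + eps

/-- The 0-1 adjacency matrix of the `E₆` Dynkin tree on vertices `0,…,5` (1-indexed `1,…,6`),
with edges `{1,2},{2,3},{3,4},{4,5},{3,6}` (0-indexed `(0,1),(1,2),(2,3),(3,4),(2,5)`). -/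
noncomputable def E6adj : Matrix (Fin 6) (Fin 6) Zeps := fun i j =>
  if ((i.val, j.val) ∈
      [(0,1),(1,2),(2,3),(3,4),(2,5),
       (1,0),(2,1),(3,2),(4,3),(5,2)] : Prop) then 1 else 0

lemma eps_sq : eps ^ 2 = 1 := by
  have h0 : (Ideal.Quotient.mk (Ideal.span {(Polynomial.X : Polynomial ℤ) ^ 2 - 1})
      ((Polynomial.X : Polynomial ℤ) ^ 2 - 1)) = 0 :=
    Ideal.Quotient.eq_zero_iff_mem.mpr (Ideal.subset_span rfl)
  have h1 : eps ^ 2 - 1 = 0 := by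
    rw [eps, ← map_pow, show (1 : Zeps) = Ideal.Quotient.mk _ 1 from rfl, ← map_sub]
    exact h0
  linear_combination h1

lemma eps_cube : eps ^ 3 = eps := by
  calc eps ^ 3 = eps ^ 2 * eps := by ring
  _ = eps := by rw [eps_sq]; ring

section VecLemmas
variable {α : Type*}
lemma v51 (a : α) (u : Fin 5 → α) : Matrix.vecCons a u 1 = u 0 := rfl
lemma v52 (a : α) (u : Fin 5 → α) : Matrix.vecCons a u 2 = u 1 := rfl
lemma v53 (a : α) (u : Fin 5 → α) : Matrix.vecCons a u 3 = u 2 := rfl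
lemma v54 (a : α) (u : Fin 5 → α) : Matrix.vecCons a u 4 = u 3 := rfl
lemma v55 (a : α) (u : Fin 5 → α) : Matrix.vecCons a u 5 = u 4 := rfl
lemma v41 (a : α) (u : Fin 4 → α) : Matrix.vecCons a u 1 = u 0 := rfl
lemma v42 (a : α) (u : Fin 4 → α) : Matrix.vecCons a u 2 = u 1 := rfl
lemma v43 (a : α) (u : Fin 4 → α) : Matrix.vecCons a u 3 = u 2 := rfl
lemma v44 (a : α) (u : Fin 4 → α) : Matrix.vecCons a u 4 = u 3 := rfl
lemma v31 (a : α) (u : Fin 3 → α) : Matrix.vecCons a u 1 = u 0 := rfl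
lemma v32 (a : α) (u : Fin 3 → α) : Matrix.vecCons a u 2 = u 1 := rfl
lemma v33 (a : α) (u : Fin 3 → α) : Matrix.vecCons a u 3 = u 2 := rfl
lemma v21 (a : α) (u : Fin 2 → α) : Matrix.vecCons a u 1 = u 0 := rfl
lemma v22 (a : α) (u : Fin 2 → α) : Matrix.vecCons a u 2 = u 1 := rfl
lemma v11 (a : α) (u : Fin 1 → α) : Matrix.vecCons a u 1 = u 0 := rfl
end VecLemmas

lemma fv0 : (((0 : Fin 6)) : ℕ) = 0 := rfl
lemma fv1 : (((1 : Fin 6)) : ℕ) = 1 := rfl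
lemma fv2 : (((2 : Fin 6)) : ℕ) = 2 := rfl
lemma fv3 : (((3 : Fin 6)) : ℕ) = 3 := rfl
lemma fv4 : (((4 : Fin 6)) : ℕ) = 4 := rfl
lemma fv5 : (((5 : Fin 6)) : ℕ) = 5 := rfl

noncomputable def Smat : Matrix (Fin 6) (Fin 6) Zeps :=
  !![(1 : Zeps), 0, 0, 0, 0, 0;
  1+eps, 1, 0, 0, 0, 0;
  1+2*eps, 1+eps, 1, 0, 0, 0;
  2+2*eps, 1+2*eps, 1+eps, 1, 0, 0;
  1+eps, 1, 0, 0, 0, -1;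
  3+2*eps, 3+eps, 1+2*eps, 1+eps, 1, -1+eps]

noncomputable def Tmat : Matrix (Fin 6) (Fin 6) Zeps :=
  !![(0 : Zeps), 0, 0, 0, 1, -1-eps;
  1, 0, 0, 0, 1+eps, -2-2*eps;
  0, 1, 0, 0, 1+2*eps, -3-3*eps;
  0, 0, 1, 0, 2*eps, -3-2*eps;
  0, 0, 0, 1, 1, -2-2*eps;
  0, 0, 0, 0, 2, -1-2*eps]

noncomputable def SmatInv : Matrix (Fin 6) (Fin 6) Zeps :=
  !![(1 : Zeps), 0, 0, 0, 0, 0;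
  -1-eps, 1, 0, 0, 0, 0;
  1, -1-eps, 1, 0, 0, 0;
  0, 1, -1-eps, 1, 0, 0;
  0, 0, 1, -1-eps, -1+eps, 1;
  0, 1, 0, 0, -1, 0]

noncomputable def TmatInv : Matrix (Fin 6) (Fin 6) Zeps :=
  !![(-1-eps : Zeps), 1, 0, 0, 0, 0;
  -1-2*eps, 0, 1, 0, 0, 0;
  -2-2*eps, 0, 0, 1, 0, 1;
  -3-2*eps, 0, 0, 0, 1, 1+eps;
  -1-2*eps, 0, 0, 0, 0, 1+eps;
  -2, 0, 0, 0, 0, 1]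

set_option maxHeartbeats 4000000 in
lemma SmatInv_mul : SmatInv * Smat = 1 := by
  ext i j
  fin_cases i <;> fin_cases j <;>
    (simp [Smat, SmatInv, Matrix.mul_apply, Fin.sum_univ_six, Matrix.one_apply, Matrix.vecHead, Matrix.vecTail,
      v51, v52, v53, v54, v55, v41, v42, v43, v44, v31, v32, v33, v21, v22, v11];
     try ring_nf;
     try simp only [eps_sq, eps_cube];
     try ring_nf)

set_option maxHeartbeats 4000000 in
lemma TmatInv_mul : TmatInv * Tmat = 1 := by
  ext i j
  fin_cases i <;> fin_cases j <;>
    (simp [Tmat, TmatInv, Matrix.mul_apply, Fin.sum_univ_six, Matrix.one_apply, Matrix.vecHead, Matrix.vecTail,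
      v51, v52, v53, v54, v55, v41, v42, v43, v44, v31, v32, v33, v21, v22, v11];
     try ring_nf;
     try simp only [eps_sq, eps_cube];
     try ring_nf)

set_option maxHeartbeats 4000000 in
/-- The quadratic Mumford matrix `M = A − h·I` of the `E₆` Du Val singularity is equivalent
over `Z_ε = ℤ[ε]/(ε² − 1)` to `diag(1,1,1,1,1, 2h − 1) = diag(1,1,1,1,1, 1 + 2ε)`. -/
theorem E6_mumford_matrix :
    ∃ S T : Matrix (Fin 6) (Fin 6) Zeps,
      IsUnit S.det ∧ IsUnit T.det ∧
      S * (E6adj - hq • (1 : Matrix (Fin 6) (Fin 6) Zeps)) * T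
        = Matrix.diagonal (fun i : Fin 6 => if i.val = 5 then 1 + 2 * eps else 1) := by
  refine ⟨Smat, Tmat, Matrix.isUnit_det_of_left_inverse SmatInv_mul,
    Matrix.isUnit_det_of_left_inverse TmatInv_mul, ?_⟩
  ext i j
  fin_cases i <;> fin_cases j <;>
    (simp [Smat, Tmat, E6adj, hq, Matrix.mul_apply, Fin.sum_univ_six, Matrix.one_apply, Matrix.vecHead, Matrix.vecTail,
      Matrix.diagonal_apply, Matrix.sub_apply, Matrix.smul_apply, smul_eq_mul,
      -Matrix.cons_mul, -Matrix.vecMul_cons, fv0, fv1, fv2, fv3, fv4, fv5,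
      v51, v52, v53, v54, v55, v41, v42, v43, v44, v31, v32, v33, v21, v22, v11];
     try ring_nf;
     try simp only [eps_sq, eps_cube];
     try ring_nf)
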